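/- arXiv:2305.14183 — 2 statements merged into one kernel-verified Lean document; each statement's English description precedes it below -/
import Mathlib

section
/- Let d ≥ 1, p ≥ 1, 0 ≤ s < 1, α, β ∈ ℝ, and let T : ℝ^d ∖ {0} → ℝ^d ∖ {0} be the inversion T(x) = x/|x|². Then for every measurable f : ℝ^d ∖ {0} → ℝ one has the identity (as values in [0, ∞]): ∫_{ℝ^d} ∫_{ℝ^d} |f(T(x)) − f(T(y))|^p |x−y|^{−d−sp} |x|^{−(d−α−sp)} |y|^{−(d−β−sp)} dy dx = ∫_{ℝ^d} ∫_{ℝ^d} |f(x) − f(y)|^p |x−y|^{−d−sp} |x|^{−α} |y|^{−β} dy dx. -/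
/-!
The inversion `T` is an involution of `ℝ^d ∖ {0}` with Jacobian `|x|^(-2d)`, and it rescales
distances by `|T x - T y| = |x - y| / (|x| |y|)`. Substituting `x ↦ T x`, `y ↦ T y` on the
right-hand side, the two Jacobians and the factor `(|x| |y|)^(d + sp)` coming from the kernel turn
the weights `|x|^(-α) |y|^(-β)` into `|x|^(-(d - α - sp)) |y|^(-(d - β - sp))`. The origin and the
diagonal are null sets, so the pointwise identity is only needed at distinct nonzero points.
-/

open MeasureTheory Metric Set Filter

open EuclideanGeometry Module
open scoped ENNReal

section Inversion

variable {E : Type*} [NormedAddCommGroup E] [InnerProductSpace ℝ E]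

theorem norm_inversion_zero_one (x : E) : ‖inversion 0 1 x‖ = ‖x‖⁻¹ := by
  simpa [dist_zero_right] using dist_inversion_center (0 : E) x 1

theorem norm_inversion_sub_inversion {x y : E} (hx : x ≠ 0) (hy : y ≠ 0) :
    ‖inversion 0 1 x - inversion 0 1 y‖ = ‖y‖⁻¹ * ‖x‖⁻¹ * ‖x - y‖ := by
  simpa [dist_eq_norm] using dist_inversion_inversion hx hy (1 : ℝ)

theorem abs_det_smul_reflection [FiniteDimensional ℝ E] (r : ℝ) (K : Submodule ℝ E)
    [K.HasOrthogonalProjection] :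
    |(r • (K.reflection : E →L[ℝ] E)).det| = |r| ^ finrank ℝ E := by
  rw [ContinuousLinearMap.det, ContinuousLinearMap.toLinearMap_smul, LinearMap.det_smul,
    show ((K.reflection : E →L[ℝ] E) : E →ₗ[ℝ] E) = K.reflection.toLinearMap from rfl,
    Submodule.det_reflection]
  simp [abs_mul, abs_pow]

noncomputable def weightedGagliardoKernel (f : E → ℝ) (p q α β : ℝ) (x y : E) : ℝ :=
  |f x - f y| ^ p / ‖x - y‖ ^ q * ‖x‖ ^ (-α) * ‖y‖ ^ (-β)

theorem rpow_neg_eq_of_add_add_eq {a : ℝ} (ha : 0 < a) {α α' q n : ℝ} (h : α + α' + q = 2 * n) :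
    a ^ (-α') = a ^ (-(2 * n)) * a ^ q * a ^ α := by
  rw [← Real.rpow_add ha, ← Real.rpow_add ha]
  congr 1
  linarith

theorem weightedGagliardoKernel_comp_inversion (f : E → ℝ) {p q α β α' β' n : ℝ}
    (hα : α + α' + q = 2 * n) (hβ : β + β' + q = 2 * n) {x y : E} (hx : x ≠ 0) (hy : y ≠ 0)
    (hxy : x ≠ y) :
    weightedGagliardoKernel (f ∘ inversion 0 1) p q α' β' x y
      = ‖x‖ ^ (-(2 * n)) * (‖y‖ ^ (-(2 * n)) *
          weightedGagliardoKernel f p q α β (inversion 0 1 x) (inversion 0 1 y)) := by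
  have hx' : 0 < ‖x‖ := norm_pos_iff.2 hx
  have hy' : 0 < ‖y‖ := norm_pos_iff.2 hy
  have hxy' : 0 < ‖x - y‖ := norm_pos_iff.2 (sub_ne_zero.2 hxy)
  simp only [weightedGagliardoKernel, Function.comp_apply, norm_inversion_zero_one,
    norm_inversion_sub_inversion hx hy, rpow_neg_eq_of_add_add_eq hx' hα,
    rpow_neg_eq_of_add_add_eq hy' hβ, Real.inv_rpow hx'.le, Real.inv_rpow hy'.le,
    Real.rpow_neg hx'.le, Real.rpow_neg hy'.le, inv_inv]
  rw [Real.mul_rpow (by positivity) hxy'.le, Real.mul_rpow (by positivity) (by positivity),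
    Real.inv_rpow hx'.le, Real.inv_rpow hy'.le]
  field_simp

variable [FiniteDimensional ℝ E] [Nontrivial E] [MeasurableSpace E] [BorelSpace E]

theorem lintegral_inversion_mul (μ : Measure E) [μ.IsAddHaarMeasure] (g : E → ℝ≥0∞) :
    ∫⁻ x, ENNReal.ofReal (‖x‖ ^ (-(2 * finrank ℝ E : ℝ))) * g (inversion 0 1 x) ∂μ
      = ∫⁻ x, g x ∂μ := by
  have hinv : Function.Involutive (inversion (0 : E) 1) := inversion_involutive 0 one_ne_zero
  have himage : inversion (0 : E) 1 '' {0}ᶜ = {0}ᶜ := by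
    rw [hinv.image_eq_preimage_symm]
    ext x
    simp
  have hderiv : ∀ x ∈ ({0}ᶜ : Set E), HasFDerivWithinAt (inversion 0 1)
      ((1 / dist x 0) ^ 2 • ((ℝ ∙ (x - 0))ᗮ.reflection : E →L[ℝ] E)) {0}ᶜ x :=
    fun x hx => (hasFDerivAt_inversion hx).hasFDerivWithinAt
  conv_rhs => rw [← restrict_compl_singleton (μ := μ) 0, ← himage,
    lintegral_image_eq_lintegral_abs_det_fderiv_mul μ (measurableSet_singleton 0).compl hderiv
      hinv.injective.injOn]
  conv_lhs => rw [← restrict_compl_singleton (μ := μ) 0]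
  refine setLIntegral_congr_fun (measurableSet_singleton 0).compl fun x _ => ?_
  rw [abs_det_smul_reflection, dist_zero_right, abs_of_nonneg (by positivity), one_div, inv_pow,
    inv_pow, ← pow_mul, Real.rpow_neg (norm_nonneg x), ← Real.rpow_natCast]
  norm_cast

end Inversion

theorem gagliardo_inversion_identity_general
    (d : ℕ) (hd : 1 ≤ d) (p : ℝ)
    (s : ℝ) (α β : ℝ)
    (f : EuclideanSpace ℝ (Fin d) → ℝ)
    (T : EuclideanSpace ℝ (Fin d) → EuclideanSpace ℝ (Fin d))
    (hT : ∀ x, T x = (‖x‖ ^ 2)⁻¹ • x) :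
    (∫⁻ x : EuclideanSpace ℝ (Fin d), ∫⁻ y : EuclideanSpace ℝ (Fin d),
      ENNReal.ofReal
        (|f (T x) - f (T y)| ^ p / ‖x - y‖ ^ ((d : ℝ) + s * p)
          * ‖x‖ ^ (-((d : ℝ) - α - s * p)) * ‖y‖ ^ (-((d : ℝ) - β - s * p))))
    = ∫⁻ x : EuclideanSpace ℝ (Fin d), ∫⁻ y : EuclideanSpace ℝ (Fin d),
        ENNReal.ofReal
          (|f x - f y| ^ p / ‖x - y‖ ^ ((d : ℝ) + s * p)
            * ‖x‖ ^ (-α) * ‖y‖ ^ (-β)) := by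
  obtain rfl : T = inversion 0 1 := funext fun x => by simp [hT, inversion]
  have : Nontrivial (EuclideanSpace ℝ (Fin d)) := ⟨⟨EuclideanSpace.single ⟨0, hd⟩ 1, 0, by simp⟩⟩
  set n : ℝ := (finrank ℝ (EuclideanSpace ℝ (Fin d)) : ℝ)
  have hn : n = d := by simp [n]
  have hα : α + ((d : ℝ) - α - s * p) + ((d : ℝ) + s * p) = 2 * n := by rw [hn]; ring
  have hβ : β + ((d : ℝ) - β - s * p) + ((d : ℝ) + s * p) = 2 * n := by rw [hn]; ring
  let K := weightedGagliardoKernel f p ((d : ℝ) + s * p) α β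
  calc _ = ∫⁻ x, ENNReal.ofReal (‖x‖ ^ (-(2 * n))) * ∫⁻ y, ENNReal.ofReal (‖y‖ ^ (-(2 * n))) *
          ENNReal.ofReal (K (inversion 0 1 x) (inversion 0 1 y)) := by
        refine lintegral_congr_ae ((volume.ae_ne 0).mono fun x hx => ?_)
        dsimp only
        rw [← lintegral_const_mul' _ _ ENNReal.ofReal_ne_top]
        refine lintegral_congr_ae (((volume.ae_ne 0).and (volume.ae_ne x)).mono fun y hy => ?_)
        dsimp only
        rw [← ENNReal.ofReal_mul (by positivity), ← ENNReal.ofReal_mul (by positivity),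
          ← weightedGagliardoKernel_comp_inversion f hα hβ hx hy.1 hy.2.symm]
        rfl
    _ = ∫⁻ x, ENNReal.ofReal (‖x‖ ^ (-(2 * n))) * ∫⁻ y, ENNReal.ofReal (K (inversion 0 1 x) y) := by
        refine lintegral_congr fun x => congrArg _ ?_
        exact lintegral_inversion_mul volume (fun y => ENNReal.ofReal (K (inversion 0 1 x) y))
    _ = ∫⁻ x, ∫⁻ y, ENNReal.ofReal (K x y) :=
        lintegral_inversion_mul volume (fun x => ∫⁻ y, ENNReal.ofReal (K x y))

/-- Invariance of the weighted Gagliardo double integral on `ℝ^d ∖ {0}` under the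
inversion `T(x) = x / |x|²`, with the exponents `α' = d - α - sp`, `β' = d - β - sp`. -/
theorem gagliardo_inversion_identity
    (d : ℕ) (hd : 1 ≤ d) (p : ℝ) (hp : 1 ≤ p)
    (s : ℝ) (hs : 0 ≤ s) (hs' : s < 1) (α β : ℝ)
    (f : EuclideanSpace ℝ (Fin d) → ℝ) (hf : Measurable f)
    (T : EuclideanSpace ℝ (Fin d) → EuclideanSpace ℝ (Fin d))
    (hT : ∀ x, T x = (‖x‖ ^ 2)⁻¹ • x) :
    (∫⁻ x : EuclideanSpace ℝ (Fin d), ∫⁻ y : EuclideanSpace ℝ (Fin d),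
      ENNReal.ofReal
        (|f (T x) - f (T y)| ^ p / ‖x - y‖ ^ ((d : ℝ) + s * p)
          * ‖x‖ ^ (-((d : ℝ) - α - s * p)) * ‖y‖ ^ (-((d : ℝ) - β - s * p))))
    = ∫⁻ x : EuclideanSpace ℝ (Fin d), ∫⁻ y : EuclideanSpace ℝ (Fin d),
        ENNReal.ofReal
          (|f x - f y| ^ p / ‖x - y‖ ^ ((d : ℝ) + s * p)
            * ‖x‖ ^ (-α) * ‖y‖ ^ (-β)) :=
  gagliardo_inversion_identity_general d hd p s α β f T hT
end

section
/- Let d ≥ 1, p ≥ 1, let Ω ⊂ ℝ^d be a nonempty open proper subset, and let f be the restriction to Ω of a twice continuously differentiable function on ℝ^d whose compact support is contained in the closure of Ω. Let U ⊂ ℝ² be a nonempty open set and (α, β) ∈ U, and assume there exists s₀ ∈ (0,1) such that for all (α', β') ∈ U and all s ∈ (s₀, 1) the double integral ∫_Ω ∫_Ω |f(x) − f(y)|^p |x−y|^{−d−sp} d_Ω(x)^{−α'} d_Ω(y)^{−β'} dy dx is finite. Then for every θ ∈ (0,1), lim_{s→1⁻} (1−s) ∫_Ω ∫_{Ω ∖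 B(x, θ d_Ω(x))} |f(x) − f(y)|^p |x−y|^{−d−sp} d_Ω(x)^{−α} d_Ω(y)^{−β} dy dx = 0, where B(x, r) denotes the open ball of radius r centered at x. -/
/-!
Off the diagonal region `|x - y| < θ d(x)`, raising the order from `s₁` to `s ∈ [s₁, 1)` costs
the factor `|x - y|^{-(s - s₁)p} ≤ θ^{-t} (d(x)^{-t} + 1)` with `t = (1 - s₁)p`. Choosing `s₁` so
close to `1` that `(α + t, β) ∈ U`, the far part of the weighted seminorm is bounded, uniformly
in `s`, by `θ^{-t}` times the sum of the finite integrals for the weights `(α + t, β)` and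
`(α, β)` at order `s₁`; the factor `1 - s` then drives it to `0`.
-/

open MeasureTheory Metric Set Filter
open scoped ENNReal Topology

theorem infDist_frontier_pos {X : Type*} [MetricSpace X] [PreconnectedSpace X] {Ω : Set X}
    (hΩ : IsOpen Ω) (hΩu : Ω ≠ univ) {x : X} (hx : x ∈ Ω) : 0 < infDist x (frontier Ω) := by
  have hne : (frontier Ω).Nonempty := nonempty_frontier_iff.mpr ⟨⟨x, hx⟩, hΩu⟩
  refine (isClosed_frontier.notMem_iff_infDist_pos hne).mp fun hxf => ?_
  exact (hΩ.frontier_eq ▸ hxf).2 hx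

theorem Real.rpow_neg_le_rpow_neg_add_one {D t t₁ : ℝ} (hD : 0 < D) (ht : 0 ≤ t) (htt₁ : t ≤ t₁) :
    D ^ (-t) ≤ D ^ (-t₁) + 1 := by
  rcases le_total D 1 with hD1 | hD1
  · linarith [Real.rpow_le_rpow_of_exponent_ge hD hD1 (neg_le_neg htt₁)]
  · linarith [Real.rpow_le_one_of_one_le_of_nonpos hD1 (neg_nonpos.mpr ht),
      Real.rpow_nonneg hD.le (-t₁)]

theorem Real.rpow_neg_le_of_mul_le {θ D r t t₁ : ℝ} (hθ0 : 0 < θ) (hθ1 : θ ≤ 1) (hD : 0 < D)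
    (hr : θ * D ≤ r) (ht : 0 ≤ t) (htt₁ : t ≤ t₁) :
    r ^ (-t) ≤ θ ^ (-t₁) * (D ^ (-t₁) + 1) :=
  calc r ^ (-t) ≤ (θ * D) ^ (-t) := Real.rpow_le_rpow_of_nonpos (by positivity) hr (by linarith)
    _ = θ ^ (-t) * D ^ (-t) := Real.mul_rpow hθ0.le hD.le
    _ ≤ θ ^ (-t₁) * (D ^ (-t₁) + 1) := by
      gcongr ?_ * ?_
      · exact Real.rpow_le_rpow_of_exponent_ge hθ0 hθ1 (neg_le_neg htt₁)
      · exact Real.rpow_neg_le_rpow_neg_add_one hD ht htt₁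

theorem MeasureTheory.lintegral_const_mul_add {X : Type*} [MeasurableSpace X] {μ : Measure X}
    {c : ℝ≥0∞} (hc : c ≠ ⊤) {f g : X → ℝ≥0∞} (hf : Measurable f) :
    ∫⁻ x, c * (f x + g x) ∂μ = c * (∫⁻ x, f x ∂μ + ∫⁻ x, g x ∂μ) := by
  rw [lintegral_const_mul' _ _ hc, lintegral_add_left hf]

section WeightedKernel

variable {E : Type*} [NormedAddCommGroup E]

noncomputable def weightedKernel (F w : E → ℝ) (p e a b : ℝ) (x y : E) : ℝ :=
  |F x - F y| ^ p / ‖x - y‖ ^ e * w x ^ (-a) * w y ^ (-b)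

variable {F w : E → ℝ} {p e a b : ℝ}

theorem weightedKernel_nonneg (hw : ∀ z, 0 ≤ w z) (x y : E) :
    0 ≤ weightedKernel F w p e a b x y := by
  unfold weightedKernel
  have := hw x; have := hw y
  positivity

theorem weightedKernel_add_le {θ t t₁ : ℝ} {x y : E} (hθ0 : 0 < θ) (hθ1 : θ ≤ 1)
    (hw : ∀ z, 0 ≤ w z) (hwx : 0 < w x) (hxy : θ * w x ≤ ‖x - y‖) (ht : 0 ≤ t)
    (htt₁ : t ≤ t₁) :
    weightedKernel F w p (e + t) a b x y ≤
      θ ^ (-t₁) * (weightedKernel F w p e (a + t₁) b x y + weightedKernel F w p e a b x y) := by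
  have hxy0 : 0 < ‖x - y‖ := (mul_pos hθ0 hwx).trans_le hxy
  have hsplit : weightedKernel F w p (e + t) a b x y =
      weightedKernel F w p e a b x y * ‖x - y‖ ^ (-t) := by
    simp only [weightedKernel, Real.rpow_add hxy0, Real.rpow_neg hxy0.le]
    field_simp
  have hshift : weightedKernel F w p e (a + t₁) b x y =
      w x ^ (-t₁) * weightedKernel F w p e a b x y := by
    simp only [weightedKernel, neg_add, Real.rpow_add hwx]
    ring
  rw [hsplit, hshift]
  calc weightedKernel F w p e a b x y * ‖x - y‖ ^ (-t)
      ≤ weightedKernel F w p e a b x y * (θ ^ (-t₁) * (w x ^ (-t₁) + 1)) :=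
        mul_le_mul_of_nonneg_left (Real.rpow_neg_le_of_mul_le hθ0 hθ1 hwx hxy ht htt₁)
          (weightedKernel_nonneg hw x y)
    _ = θ ^ (-t₁) * (w x ^ (-t₁) * weightedKernel F w p e a b x y +
          weightedKernel F w p e a b x y) := by ring

variable [MeasurableSpace E]

theorem measurable_weightedKernel [MeasurableSub₂ E] [OpensMeasurableSpace E]
    (hF : Measurable F) (hw : Measurable w) :
    Measurable (Function.uncurry (weightedKernel F w p e a b)) := by
  unfold weightedKernel Function.uncurry
  fun_prop

theorem lintegral_far_weightedKernel_le [MeasurableSub₂ E] [OpensMeasurableSpace E]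
    {μ : Measure E} [SFinite μ] {Ω : Set E} {θ t t₁ : ℝ} (hΩ : MeasurableSet Ω)
    (hF : Measurable F) (hwm : Measurable w) (hw : ∀ z, 0 ≤ w z) (hwΩ : ∀ x ∈ Ω, 0 < w x)
    (hθ0 : 0 < θ) (hθ1 : θ ≤ 1) (ht : 0 ≤ t) (htt₁ : t ≤ t₁) :
    ∫⁻ x in Ω, ∫⁻ y in Ω \ ball x (θ * w x),
        ENNReal.ofReal (weightedKernel F w p (e + t) a b x y) ∂μ ∂μ ≤
      ENNReal.ofReal (θ ^ (-t₁)) *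
        ((∫⁻ x in Ω, ∫⁻ y in Ω, ENNReal.ofReal (weightedKernel F w p e (a + t₁) b x y) ∂μ ∂μ) +
          ∫⁻ x in Ω, ∫⁻ y in Ω, ENNReal.ofReal (weightedKernel F w p e a b x y) ∂μ ∂μ) := by
  have hK : ∀ a', Measurable (Function.uncurry (weightedKernel F w p e a' b)) :=
    fun _ => measurable_weightedKernel hF hwm
  have hpt : ∀ x ∈ Ω, ∀ y ∈ Ω \ ball x (θ * w x),
      ENNReal.ofReal (weightedKernel F w p (e + t) a b x y) ≤
        ENNReal.ofReal (θ ^ (-t₁)) * (ENNReal.ofReal (weightedKernel F w p e (a + t₁) b x y) +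
          ENNReal.ofReal (weightedKernel F w p e a b x y)) := by
    intro x hx y hy
    have hxy : θ * w x ≤ ‖x - y‖ := by
      simpa [dist_eq_norm, norm_sub_rev] using hy.2
    rw [← ENNReal.ofReal_add (weightedKernel_nonneg hw x y) (weightedKernel_nonneg hw x y),
      ← ENNReal.ofReal_mul (by positivity)]
    exact ENNReal.ofReal_le_ofReal
      (weightedKernel_add_le hθ0 hθ1 hw (hwΩ x hx) hxy ht htt₁)
  calc _ ≤ ∫⁻ x in Ω, ∫⁻ y in Ω, ENNReal.ofReal (θ ^ (-t₁)) *
          (ENNReal.ofReal (weightedKernel F w p e (a + t₁) b x y) +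
            ENNReal.ofReal (weightedKernel F w p e a b x y)) ∂μ ∂μ := by
        refine setLIntegral_mono' hΩ fun x hx => ?_
        exact (setLIntegral_mono' (hΩ.diff measurableSet_ball) (hpt x hx)).trans
          (lintegral_mono_set sdiff_subset)
    _ = _ := by
      have hmy : ∀ a' x, Measurable fun y => ENNReal.ofReal (weightedKernel F w p e a' b x y) :=
        fun a' x => (hK a').of_uncurry_left.ennreal_ofReal
      have hmx : ∀ a', Measurable fun x =>
          ∫⁻ y in Ω, ENNReal.ofReal (weightedKernel F w p e a' b x y) ∂μ :=
        fun a' => Measurable.lintegral_prod_right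
          (f := fun x y => ENNReal.ofReal (weightedKernel F w p e a' b x y))
          (ENNReal.measurable_ofReal.comp (hK a'))
      rw [lintegral_congr fun x => lintegral_const_mul_add ENNReal.ofReal_ne_top (hmy _ x),
        lintegral_const_mul_add ENNReal.ofReal_ne_top (hmx _)]

end WeightedKernel

theorem tendsto_sub_mul_toReal_of_eventually_le {a : ℝ} {f : ℝ → ℝ≥0∞} {C : ℝ≥0∞}
    (hC : C ≠ ⊤) (hf : ∀ᶠ s in 𝓝[<] a, f s ≤ C) :
    Tendsto (fun s => (a - s) * (f s).toReal) (𝓝[<] a) (𝓝 0) := by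
  have hlim : Tendsto (fun s : ℝ => (a - s) * C.toReal) (𝓝[<] a) (𝓝 0) := by
    have hcont : Continuous fun s : ℝ => (a - s) * C.toReal := by fun_prop
    simpa using (hcont.tendsto a).mono_left nhdsWithin_le_nhds
  refine squeeze_zero' ?_ ?_ hlim
  · filter_upwards [self_mem_nhdsWithin] with s hs
    exact mul_nonneg (sub_nonneg.2 (le_of_lt hs)) ENNReal.toReal_nonneg
  · filter_upwards [self_mem_nhdsWithin, hf] with s hs hfs
    exact mul_le_mul_of_nonneg_left (ENNReal.toReal_mono hC hfs) (sub_nonneg.2 (le_of_lt hs))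

theorem weighted_offdiagonal_vanishes_general
    (d : ℕ) (p : ℝ) (hp : 1 ≤ p)
    (Ω : Set (EuclideanSpace ℝ (Fin d))) (hΩo : IsOpen Ω)
    (hΩp : Ω ≠ Set.univ)
    (F : EuclideanSpace ℝ (Fin d) → ℝ) (hF : ContDiff ℝ 2 F)
    (U : Set (ℝ × ℝ)) (hU : IsOpen U)
    (α β : ℝ) (hαβ : (α, β) ∈ U)
    (s₀ : ℝ) (hs₀ : s₀ ∈ Set.Ioo (0 : ℝ) 1)
    (hfin : ∀ α' β' : ℝ, (α', β') ∈ U → ∀ s ∈ Set.Ioo s₀ 1,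
      (∫⁻ x in Ω, ∫⁻ y in Ω, ENNReal.ofReal
        (|F x - F y| ^ p / ‖x - y‖ ^ ((d : ℝ) + s * p)
          * (infDist x (frontier Ω)) ^ (-α') * (infDist y (frontier Ω)) ^ (-β'))) ≠ ⊤)
    (θ : ℝ) (hθ : θ ∈ Set.Ioo (0 : ℝ) 1) :
    Filter.Tendsto
      (fun s : ℝ => (1 - s) *
        (∫⁻ x in Ω, ∫⁻ y in Ω \ Metric.ball x (θ * infDist x (frontier Ω)),
          ENNReal.ofReal
            (|F x - F y| ^ p / ‖x - y‖ ^ ((d : ℝ) + s * p)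
              * (infDist x (frontier Ω)) ^ (-α) * (infDist y (frontier Ω)) ^ (-β))).toReal)
      (nhdsWithin 1 (Set.Iio 1)) (nhds 0) := by
  have hshift : Tendsto (fun s : ℝ => (α + (1 - s) * p, β)) (𝓝 1) (𝓝 (α, β)) := by
    have hcont : Continuous fun s : ℝ => (α + (1 - s) * p, β) := by fun_prop
    simpa using hcont.tendsto 1
  obtain ⟨s₁, hs₁, hs₁U⟩ := (Eventually.and (Ioo_mem_nhdsLT hs₀.2)
    ((hshift.mono_left nhdsWithin_le_nhds).eventually (hU.mem_nhds hαβ))).exists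
  refine tendsto_sub_mul_toReal_of_eventually_le
    (ENNReal.mul_ne_top (ENNReal.ofReal_ne_top (r := θ ^ (-((1 - s₁) * p))))
      (ENNReal.add_ne_top.2 ⟨hfin _ _ hs₁U s₁ hs₁, hfin α β hαβ s₁ hs₁⟩)) ?_
  filter_upwards [Ico_mem_nhdsLT hs₁.2] with s hs
  rw [show (d : ℝ) + s * p = (d + s₁ * p) + (s - s₁) * p by ring]
  exact lintegral_far_weightedKernel_le hΩo.measurableSet hF.continuous.measurable
    (continuous_infDist_pt _).measurable (fun _ => infDist_nonneg)
    (fun _ hx => infDist_frontier_pos hΩo hΩp hx) hθ.1 hθ.2.le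
    (mul_nonneg (sub_nonneg.2 hs.1) (by linarith)) (by nlinarith [hs.2])

/-- The far-off-diagonal part of the weighted Gagliardo seminorm of a smooth compactly
supported function vanishes in the limit `s → 1⁻`. -/
theorem weighted_offdiagonal_vanishes
    (d : ℕ) (hd : 1 ≤ d) (p : ℝ) (hp : 1 ≤ p)
    (Ω : Set (EuclideanSpace ℝ (Fin d))) (hΩo : IsOpen Ω) (hΩne : Ω.Nonempty)
    (hΩp : Ω ≠ Set.univ)
    (F : EuclideanSpace ℝ (Fin d) → ℝ) (hF : ContDiff ℝ 2 F)
    (hFc : HasCompactSupport F) (hFsupp : tsupport F ⊆ closure Ω)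
    (U : Set (ℝ × ℝ)) (hU : IsOpen U) (hUne : U.Nonempty)
    (α β : ℝ) (hαβ : (α, β) ∈ U)
    (s₀ : ℝ) (hs₀ : s₀ ∈ Set.Ioo (0 : ℝ) 1)
    (hfin : ∀ α' β' : ℝ, (α', β') ∈ U → ∀ s ∈ Set.Ioo s₀ 1,
      (∫⁻ x in Ω, ∫⁻ y in Ω, ENNReal.ofReal
        (|F x - F y| ^ p / ‖x - y‖ ^ ((d : ℝ) + s * p)
          * (infDist x (frontier Ω)) ^ (-α') * (infDist y (frontier Ω)) ^ (-β'))) ≠ ⊤)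
    (θ : ℝ) (hθ : θ ∈ Set.Ioo (0 : ℝ) 1) :
    Filter.Tendsto
      (fun s : ℝ => (1 - s) *
        (∫⁻ x in Ω, ∫⁻ y in Ω \ Metric.ball x (θ * infDist x (frontier Ω)),
          ENNReal.ofReal
            (|F x - F y| ^ p / ‖x - y‖ ^ ((d : ℝ) + s * p)
              * (infDist x (frontier Ω)) ^ (-α) * (infDist y (frontier Ω)) ^ (-β))).toReal)
      (nhdsWithin 1 (Set.Iio 1)) (nhds 0) :=
  weighted_offdiagonal_vanishes_general d p hp Ω hΩo hΩp F hF U hU α β hαβ s₀ hs₀ hfin θ hθ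
end
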